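/- Differentiability and invertibility of the characteristic map (Lemma 3.1). Let L_G, L_ξ > 0 and set t⋆ = (L_G L_ξ)^{-1}. Assume: (i) ξ : ℝ^{D×D} → ℝ is C² and ∇ξ is L_ξ-Lipschitz on B; (ii) G : Q_∞ → Q_{∞,≤1} is L_G-Lipschitz for the L^∞ norm and is Fréchet differentiable at every q ∈ Q_∞ (as a map into L^∞) with derivative DG(q) a bounded linear operator on L^∞ satisfying ‖DG(q)‖_{Op(L^∞;L^∞)} ≤ L_G. Define X : ℝ_+ × Q_∞ → L^∞ by X(t,q) = q − t ∇ξ(G(q)), where ∇ξ(G(q)) is the path s ↦ ∇ξ(G(q)(s)). Then for every t ≥ 0 the map X(t,·) is Fréchet differentiable at every q ∈ Q_∞ with derivative the bounded operator ∇X(t,q) on L^∞ given by (∇X(t,q)κ)(s) = κ(s) − t ∇²ξ(G(q)(s)) ((DG(q)κ)(s)); moreover ‖I − ∇X(t,q)‖_{Op(L^∞;L^∞)} ≤ t/t⋆, and if t < t⋆ then ∇X(t,q) is a linear bijection of L^∞ onto itself. -/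

import Mathlib

noncomputable section

open MeasureTheory Set Filter Topology RealInnerProductSpace

/-- `D×D` real matrices with the Frobenius (Euclidean) norm. -/
abbrev Mat (D : ℕ) : Type := EuclideanSpace ℝ (Fin D × Fin D)

/-- symmetric positive semidefinite matrices -/
def Mat.PSD {D : ℕ} (a : Mat D) : Prop :=
  (∀ i j : Fin D, a (i, j) = a (j, i)) ∧
    ∀ v : Fin D → ℝ, 0 ≤ ∑ i, ∑ j, v i * a (i, j) * v j

/-- the unit interval `[0,1)` as a type -/
abbrev UI : Type := Set.Ico (0 : ℝ) 1

abbrev SPath (D : ℕ) : Type := UI → Mat D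

/-- Lebesgue measure on `[0,1)` -/
instance : MeasureSpace UI := ⟨(volume : Measure ℝ).comap Subtype.val⟩

/-- càdlàg increasing `S^D_+`-valued path, i.e. a member of `Q` -/
def IsQ {D : ℕ} (p : SPath D) : Prop :=
  (∀ s, Mat.PSD (p s)) ∧
  (∀ s t : UI, s ≤ t → Mat.PSD (p t - p s)) ∧
  (∀ s : UI, ContinuousWithinAt p (Set.Ici s) s) ∧
  (∀ s : UI, (0 : ℝ) < (s : ℝ) →
    ∃ L : Mat D, Tendsto p (nhdsWithin s (Set.Iio s)) (nhds L))

/-- `L^∞` norm (sup norm on `[0,1)`) -/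
def supN {D : ℕ} (p : SPath D) : ℝ := sSup (Set.range fun s => ‖p s‖)

/-- bounded path, i.e. member of `L^∞` -/
def Bdd {D : ℕ} (p : SPath D) : Prop := BddAbove (Set.range fun s => ‖p s‖)

/-- `L¹` norm -/
def L1N {D : ℕ} (p : SPath D) : ℝ := ∫ s, ‖p s‖

/-- `L²` norm -/
def L2N {D : ℕ} (p : SPath D) : ℝ := Real.sqrt (∫ s, ‖p s‖ ^ 2)

/-- `L²` inner product -/
def L2I {D : ℕ} (p q : SPath D) : ℝ := ∫ s, ⟪p s, q s⟫

def Qinf (D : ℕ) : Set (SPath D) := {p | IsQ p ∧ Bdd p}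

def Qle1 (D : ℕ) : Set (SPath D) := {p | IsQ p ∧ ∀ s, ‖p s‖ ≤ 1}

def Q1 (D : ℕ) : Set (SPath D) := {p | IsQ p ∧ Integrable fun s => ‖p s‖}

def Q2 (D : ℕ) : Set (SPath D) := {p | IsQ p ∧ Integrable fun s => ‖p s‖ ^ 2}

/-- the path `s ↦ ∇ξ(p(s))` -/
def gradPath {D : ℕ} (ξ : Mat D → ℝ) (p : SPath D) : SPath D := fun s => gradient ξ (p s)

/-- `θ(a) = a·∇ξ(a) − ξ(a)` -/
def theta {D : ℕ} (ξ : Mat D → ℝ) (a : Mat D) : ℝ := ⟪a, gradient ξ a⟫ - ξ a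

/-- `∇ξ` is `L`-Lipschitz on the unit ball `B` -/
def LipOnB {D : ℕ} (ξ : Mat D → ℝ) (L : ℝ) : Prop :=
  ∀ a b : Mat D, ‖a‖ ≤ 1 → ‖b‖ ≤ 1 → ‖gradient ξ a - gradient ξ b‖ ≤ L * ‖a - b‖

/-!
Pointwise in `s`, the first-order remainder of `X(t,·)` at `q` is `t` times the remainder of the
chain rule for `∇ξ ∘ G`. The latter is uniformly small: `∇ξ` is uniformly differentiable on the
compact convex ball `B` (mean value inequality plus uniform continuity of `∇²ξ`), and `G` is
Lipschitz and differentiable for the sup norm. A Lipschitz constant of `∇ξ` on `B` bounds `∇²ξ` on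
the interior of `B`, hence on all of `B` by continuity, so `I − ∇X(t,q)` has norm at most
`t L_G L_ξ` on bounded paths. These form the Banach space `ℓ^∞`, so for `t < t⋆` the Neumann series
inverts `∇X(t,q)`.
-/

open scoped ENNReal

section Calculus

variable {E F : Type*} [NormedAddCommGroup E] [NormedSpace ℝ E]
  [NormedAddCommGroup F] [NormedSpace ℝ F]

theorem ContDiff.gradient {H : Type*} [NormedAddCommGroup H] [InnerProductSpace ℝ H]
    [CompleteSpace H] {f : H → ℝ} {m n : WithTop ℕ∞} (hf : ContDiff ℝ n f) (hmn : m + 1 ≤ n) :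
    ContDiff ℝ m (gradient f) :=
  (InnerProductSpace.toDual ℝ H).symm.contDiff.comp (hf.fderiv_right hmn)

theorem norm_fderiv_le_on_closure_interior {g : E → F} (hg : ContDiff ℝ 1 g) {s : Set E} {L : ℝ}
    (hL : 0 ≤ L) (hlip : ∀ a ∈ s, ∀ b ∈ s, ‖g a - g b‖ ≤ L * ‖a - b‖) :
    ∀ a ∈ closure (interior s), ‖fderiv ℝ g a‖ ≤ L := by
  have hclosed : IsClosed {a | ‖fderiv ℝ g a‖ ≤ L} :=
    isClosed_le (hg.continuous_fderiv one_ne_zero).norm continuous_const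
  refine hclosed.closure_subset_iff.2 fun a ha => ?_
  refine ((hg.differentiable one_ne_zero) a).hasFDerivAt.le_of_lip' hL ?_
  filter_upwards [isOpen_interior.mem_nhds ha] with b hb
  exact hlip b (interior_subset hb) a (interior_subset ha)

theorem exists_norm_sub_sub_fderiv_le_of_isCompact_convex {g : E → F} (hg : ContDiff ℝ 1 g)
    {s : Set E} (hs : IsCompact s) (hconv : Convex ℝ s) {ε : ℝ} (hε : 0 < ε) :
    ∃ δ > 0, ∀ a ∈ s, ∀ b ∈ s, ‖b - a‖ ≤ δ →
      ‖g b - g a - fderiv ℝ g a (b - a)‖ ≤ ε * ‖b - a‖ := by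
  obtain ⟨δ, hδ, hclose⟩ := Metric.uniformContinuousOn_iff_le.1
    (hs.uniformContinuousOn_of_continuous (hg.continuous_fderiv one_ne_zero).continuousOn) ε hε
  refine ⟨δ, hδ, fun a ha b hb hab => ?_⟩
  have hseg : Convex ℝ (s ∩ Metric.closedBall a δ) := hconv.inter (convex_closedBall a δ)
  refine hseg.norm_image_sub_le_of_norm_fderiv_le'
    (fun x _ => (hg.differentiable one_ne_zero) x) (fun x hx => ?_)
    ⟨ha, Metric.mem_closedBall_self hδ.le⟩ ⟨hb, by rwa [Metric.mem_closedBall, dist_eq_norm]⟩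
  rw [← dist_eq_norm]
  exact hclose x hx.1 a ha hx.2

end Calculus

section Neumann

variable {ι E : Type*} [NormedAddCommGroup E] [NormedSpace ℝ E] [CompleteSpace E]

theorem bijOn_sub_of_iSup_norm_le {A : (ι → E) →ₗ[ℝ] ι → E} {c : ℝ} (hc : c < 1)
    (hA : ∀ f, Memℓp f ∞ → Memℓp (A f) ∞ ∧ ⨆ i, ‖A f i‖ ≤ c * ⨆ i, ‖f i‖) :
    BijOn (fun f => f - A f) {f | Memℓp f ∞} {f | Memℓp f ∞} := by
  let T : lp (fun _ : ι => E) ∞ →L[ℝ] lp (fun _ : ι => E) ∞ :=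
    LinearMap.mkContinuous
      { toFun := fun f => ⟨A ⇑f, (hA f f.2).1⟩
        map_add' := fun f g => lp.ext (map_add A ⇑f ⇑g)
        map_smul' := fun r f => lp.ext (map_smul A r ⇑f) }
      c fun f => (hA f f.2).2
  have hT : ‖T‖ < 1 := (LinearMap.mkContinuous_norm_le' _ _).trans_lt (max_lt hc one_pos)
  let e := ContinuousLinearEquiv.unitsEquiv ℝ _ (Units.oneSub T hT)
  have he : ∀ f : lp (fun _ : ι => E) ∞, ⇑(e f) = f - A f := fun f => rfl
  refine ⟨fun f (hf : Memℓp f ∞) => hf.sub (hA f hf).1, fun f hf g hg hfg => ?_, fun ρ hρ => ?_⟩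
  · have : e ⟨f, hf⟩ = e ⟨g, hg⟩ := lp.ext (by rw [he, he]; exact hfg)
    exact congrArg Subtype.val (e.injective this)
  · refine ⟨e.symm ⟨ρ, hρ⟩, (e.symm ⟨ρ, hρ⟩).2, ?_⟩
    simp only [← he, ContinuousLinearEquiv.apply_symm_apply]

end Neumann

instance : Nonempty UI := ⟨⟨0, left_mem_Ico.2 one_pos⟩⟩

section Paths

variable {D : ℕ}

theorem bdd_iff_memℓp {p : SPath D} : Bdd p ↔ Memℓp p ∞ := memℓp_infty_iff.symm

theorem Bdd.of_norm_le {p : SPath D} {C : ℝ} (h : ∀ s, ‖p s‖ ≤ C) : Bdd p :=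
  ⟨C, by rintro _ ⟨s, rfl⟩; exact h s⟩

theorem Bdd.of_forall_mem {p : SPath D} {K : Set (Mat D)} (hK : Bornology.IsBounded K)
    (h : ∀ s, p s ∈ K) : Bdd p := by
  obtain ⟨C, hC⟩ := hK.exists_norm_le
  exact Bdd.of_norm_le fun s => hC _ (h s)

theorem Bdd.sub {p p' : SPath D} (hp : Bdd p) (hp' : Bdd p') : Bdd (p - p') :=
  bdd_iff_memℓp.2 ((bdd_iff_memℓp.1 hp).sub (bdd_iff_memℓp.1 hp'))

theorem norm_le_supN {p : SPath D} (hp : Bdd p) (s : UI) : ‖p s‖ ≤ supN p :=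
  le_csSup hp ⟨s, rfl⟩

theorem supN_le {p : SPath D} {C : ℝ} (h : ∀ s, ‖p s‖ ≤ C) : supN p ≤ C :=
  csSup_le (range_nonempty _) (by rintro _ ⟨s, rfl⟩; exact h s)

theorem LipOnB.norm_fderiv_gradient_le {ξ : Mat D → ℝ} {L : ℝ} (hξ : LipOnB ξ L) (hL : 0 ≤ L)
    (hg : ContDiff ℝ 1 (gradient ξ)) {a : Mat D} (ha : a ∈ Metric.closedBall 0 1) :
    ‖fderiv ℝ (gradient ξ) a‖ ≤ L := by
  refine norm_fderiv_le_on_closure_interior hg hL (s := Metric.closedBall 0 1)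
    (fun a ha b hb => hξ a b (mem_closedBall_zero_iff.1 ha) (mem_closedBall_zero_iff.1 hb)) a ?_
  rwa [interior_closedBall _ one_ne_zero, closure_ball _ one_ne_zero]

theorem exists_norm_comp_remainder_le {g : Mat D → Mat D} (hg : ContDiff ℝ 1 g)
    {K : Set (Mat D)} (hK : IsCompact K) (hKconv : Convex ℝ K) {L_g : ℝ} (hLg : 0 < L_g)
    (hgK : ∀ a ∈ K, ‖fderiv ℝ g a‖ ≤ L_g) {G : SPath D → SPath D}
    (hGK : ∀ p ∈ Qinf D, ∀ s, G p s ∈ K) {q : SPath D} (hq : q ∈ Qinf D) {L_G : ℝ}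
    (hLG : 0 < L_G) (hGLip : ∀ p ∈ Qinf D, supN (G p - G q) ≤ L_G * supN (p - q))
    {Λ : SPath D →ₗ[ℝ] SPath D} (hΛ : ∀ κ, Bdd κ → Bdd (Λ κ))
    (hGdiff : ∀ ε > 0, ∃ δ > 0, ∀ p ∈ Qinf D, supN (p - q) ≤ δ →
      supN (G p - G q - Λ (p - q)) ≤ ε * supN (p - q)) :
    ∀ ε > 0, ∃ δ > 0, ∀ p ∈ Qinf D, supN (p - q) ≤ δ → ∀ s,
      ‖g (G p s) - g (G q s) - fderiv ℝ g (G q s) (Λ (p - q) s)‖ ≤ ε * supN (p - q) := by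
  intro ε hε
  obtain ⟨δ₀, hδ₀, htaylor⟩ :=
    exists_norm_sub_sub_fderiv_le_of_isCompact_convex hg hK hKconv (ε := ε / (2 * L_G))
      (by positivity)
  obtain ⟨δ₁, hδ₁, hrem⟩ := hGdiff (ε / (2 * L_g)) (by positivity)
  refine ⟨min δ₁ (δ₀ / L_G), by positivity, fun p hp hpq s => ?_⟩
  have hGbdd : ∀ p ∈ Qinf D, Bdd (G p) := fun p hp => Bdd.of_forall_mem hK.isBounded (hGK p hp)
  have hGpq : Bdd (G p - G q) := (hGbdd p hp).sub (hGbdd q hq)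
  have hdist : ‖G p s - G q s‖ ≤ L_G * supN (p - q) :=
    (norm_le_supN hGpq s).trans (hGLip p hp)
  have hclose : ‖G p s - G q s‖ ≤ δ₀ := by
    refine hdist.trans ?_
    rw [← le_div_iff₀' hLG]
    exact hpq.trans (min_le_right _ _)
  have hrems : ‖(G p - G q - Λ (p - q)) s‖ ≤ ε / (2 * L_g) * supN (p - q) :=
    (norm_le_supN (hGpq.sub (hΛ _ (hp.2.sub hq.2))) s).trans
      (hrem p hp (hpq.trans (min_le_left _ _)))
  set H := fderiv ℝ g (G q s)
  calc ‖g (G p s) - g (G q s) - H (Λ (p - q) s)‖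
      = ‖(g (G p s) - g (G q s) - H (G p s - G q s)) + H ((G p - G q - Λ (p - q)) s)‖ := by
        simp only [Pi.sub_apply, map_sub]
        abel_nf
    _ ≤ ε / (2 * L_G) * ‖G p s - G q s‖ + L_g * ‖(G p - G q - Λ (p - q)) s‖ :=
        norm_add_le_of_le (htaylor _ (hGK q hq s) _ (hGK p hp s) hclose)
          (H.le_of_opNorm_le (hgK _ (hGK q hq s)) _)
    _ ≤ ε / (2 * L_G) * (L_G * supN (p - q)) + L_g * (ε / (2 * L_g) * supN (p - q)) := by
        gcongr
    _ = ε * supN (p - q) := by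
        field_simp
        ring

theorem norm_piMap_comp_apply_le {M : UI → Mat D →L[ℝ] Mat D} {a : ℝ} (hM : ∀ s, ‖M s‖ ≤ a)
    {Λ : SPath D →ₗ[ℝ] SPath D} {b : ℝ} (hΛ : ∀ κ, Bdd κ → Bdd (Λ κ) ∧ supN (Λ κ) ≤ b * supN κ)
    {κ : SPath D} (hκ : Bdd κ) (s : UI) :
    ‖(LinearMap.piMap (fun s => (M s).toLinearMap) ∘ₗ Λ) κ s‖ ≤ a * b * supN κ := by
  have ha : 0 ≤ a := (norm_nonneg _).trans (hM s)
  calc ‖M s (Λ κ s)‖ ≤ a * ‖Λ κ s‖ := (M s).le_of_opNorm_le (hM s) _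
    _ ≤ a * (b * supN κ) := by gcongr; exact (norm_le_supN (hΛ κ hκ).1 s).trans (hΛ κ hκ).2
    _ = a * b * supN κ := (mul_assoc _ _ _).symm

theorem bijOn_sub_piMap_comp {M : UI → Mat D →L[ℝ] Mat D} {a : ℝ} (hM : ∀ s, ‖M s‖ ≤ a)
    {Λ : SPath D →ₗ[ℝ] SPath D} {b : ℝ} (hΛ : ∀ κ, Bdd κ → Bdd (Λ κ) ∧ supN (Λ κ) ≤ b * supN κ)
    (hab : a * b < 1) :
    BijOn (fun κ => κ - (LinearMap.piMap (fun s => (M s).toLinearMap) ∘ₗ Λ) κ)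
      {κ | Bdd κ} {κ | Bdd κ} := by
  have hbdd : {κ : SPath D | Bdd κ} = {κ | Memℓp κ ∞} := Set.ext fun _ => bdd_iff_memℓp
  rw [hbdd]
  refine bijOn_sub_of_iSup_norm_le hab fun κ hκ => ?_
  have hpt := norm_piMap_comp_apply_le hM hΛ (bdd_iff_memℓp.2 hκ)
  exact ⟨bdd_iff_memℓp.1 (Bdd.of_norm_le hpt), supN_le hpt⟩

theorem exists_supN_id_sub_smul_remainder_le {F Λ : SPath D → SPath D} {q : SPath D} {t : ℝ}
    (ht : 0 ≤ t) (hF : ∀ ε > 0, ∃ δ > 0, ∀ p ∈ Qinf D, supN (p - q) ≤ δ → ∀ s,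
      ‖F p s - F q s - Λ (p - q) s‖ ≤ ε * supN (p - q)) :
    ∀ ε > 0, ∃ δ > 0, ∀ p ∈ Qinf D, supN (p - q) ≤ δ →
      supN ((fun s => (p s - t • F p s) - (q s - t • F q s) -
        ((p s - q s) - t • Λ (p - q) s)) : SPath D) ≤ ε * supN (p - q) := by
  intro ε hε
  obtain ⟨δ, hδ, hrem⟩ := hF (ε / (t + 1)) (by positivity)
  refine ⟨δ, hδ, fun p hp hpq => supN_le fun s => ?_⟩
  have hsup : 0 ≤ supN (p - q) := Real.sSup_nonneg (by rintro _ ⟨s, rfl⟩; exact norm_nonneg _)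
  have hεt : t * (ε / (t + 1)) ≤ ε := by
    rw [mul_div_assoc', div_le_iff₀ (by positivity)]
    nlinarith
  calc ‖(p s - t • F p s) - (q s - t • F q s) - ((p s - q s) - t • Λ (p - q) s)‖
      = ‖-(t • (F p s - F q s - Λ (p - q) s))‖ := by
        congr 1
        module
    _ = t * ‖F p s - F q s - Λ (p - q) s‖ := by
        rw [norm_neg, norm_smul, Real.norm_of_nonneg ht]
    _ ≤ t * (ε / (t + 1)) * supN (p - q) := by
        rw [mul_assoc]
        gcongr
        exact hrem p hp hpq s
    _ ≤ ε * supN (p - q) := by gcongr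

end Paths

theorem characteristic_map_differentiable_invertible
    {D : ℕ} (L_G L_ξ : ℝ) (hLG : 0 < L_G) (hLξ : 0 < L_ξ)
    (ξ : Mat D → ℝ) (hξ : ContDiff ℝ 2 ξ) (hξLip : LipOnB ξ L_ξ)
    (G : SPath D → SPath D) (hGmem : ∀ q ∈ Qinf D, G q ∈ Qle1 D)
    (hGLip : ∀ q ∈ Qinf D, ∀ q' ∈ Qinf D, supN (G q - G q') ≤ L_G * supN (q - q'))
    (DG : SPath D → SPath D →ₗ[ℝ] SPath D)
    (hDGbdd : ∀ q ∈ Qinf D, ∀ κ : SPath D, Bdd κ →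
      Bdd (DG q κ) ∧ supN (DG q κ) ≤ L_G * supN κ)
    (hGdiff : ∀ q ∈ Qinf D, ∀ ε > 0, ∃ δ > 0, ∀ q' ∈ Qinf D, supN (q' - q) ≤ δ →
      supN (G q' - G q - DG q (q' - q)) ≤ ε * supN (q' - q)) :
    ∀ t : ℝ, 0 ≤ t → ∀ q ∈ Qinf D,
      -- Fréchet differentiability of `X(t,·)` at `q` with the stated derivative
      (∀ ε > 0, ∃ δ > 0, ∀ q' ∈ Qinf D, supN (q' - q) ≤ δ →
        supN ((fun s => (q' s - t • gradient ξ (G q' s)) - (q s - t • gradient ξ (G q s)) -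
            ((q' s - q s) - t • fderiv ℝ (gradient ξ) (G q s) (DG q (q' - q) s)) :
          SPath D)) ≤ ε * supN (q' - q)) ∧
      -- `∇X(t,q)` is a bounded operator on `L^∞` and `‖I − ∇X(t,q)‖_{Op} ≤ t/t⋆ = t L_G L_ξ`
      (∀ κ : SPath D, Bdd κ →
        Bdd ((fun s => κ s - t • fderiv ℝ (gradient ξ) (G q s) (DG q κ s)) : SPath D) ∧
        supN ((fun s => t • fderiv ℝ (gradient ξ) (G q s) (DG q κ s)) : SPath D) ≤
          t * (L_G * L_ξ) * supN κ) ∧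
      -- for `t < t⋆` the operator `∇X(t,q)` is a bijection of `L^∞` onto itself
      (t < (L_G * L_ξ)⁻¹ →
        Set.BijOn
          (fun κ : SPath D =>
            (fun s => κ s - t • fderiv ℝ (gradient ξ) (G q s) (DG q κ s) : SPath D))
          {κ : SPath D | Bdd κ} {κ : SPath D | Bdd κ}) := by
  intro t ht q hq
  have hg : ContDiff ℝ 1 (gradient ξ) := hξ.gradient le_rfl
  have hGball : ∀ p ∈ Qinf D, ∀ s, G p s ∈ Metric.closedBall 0 1 :=
    fun p hp s => mem_closedBall_zero_iff.2 ((hGmem p hp).2 s)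
  have hHess : ∀ a ∈ Metric.closedBall (0 : Mat D) 1, ‖fderiv ℝ (gradient ξ) a‖ ≤ L_ξ :=
    fun a ha => hξLip.norm_fderiv_gradient_le hLξ.le hg ha
  have hM : ∀ s, ‖t • fderiv ℝ (gradient ξ) (G q s)‖ ≤ t * L_ξ := fun s => by
    rw [norm_smul, Real.norm_of_nonneg ht]
    exact mul_le_mul_of_nonneg_left (hHess _ (hGball q hq s)) ht
  have hcorr : ∀ κ, Bdd κ → ∀ s,
      ‖t • fderiv ℝ (gradient ξ) (G q s) (DG q κ s)‖ ≤ t * (L_G * L_ξ) * supN κ :=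
    fun κ hκ s => (norm_piMap_comp_apply_le hM (hDGbdd q hq) hκ s).trans_eq (by ring)
  refine ⟨exists_supN_id_sub_smul_remainder_le (F := fun p s => gradient ξ (G p s))
      (Λ := fun κ s => fderiv ℝ (gradient ξ) (G q s) (DG q κ s)) ht ?_,
    fun κ hκ => ⟨hκ.sub (Bdd.of_norm_le (hcorr κ hκ)), supN_le (hcorr κ hκ)⟩,
    fun htt => bijOn_sub_piMap_comp hM (hDGbdd q hq) ?_⟩
  · exact exists_norm_comp_remainder_le hg (isCompact_closedBall 0 1) (convex_closedBall 0 1)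
      hLξ hHess hGball hq hLG (fun p hp => hGLip p hp q hq) (fun κ hκ => (hDGbdd q hq κ hκ).1)
      (hGdiff q hq)
  · rw [← mul_one (L_G * L_ξ)⁻¹, lt_inv_mul_iff₀' (by positivity)] at htt
    linarith
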